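/- arXiv:2212.02600 — 3 statements merged into one kernel-verified Lean document; each statement's English description precedes it below -/
import Mathlib

section
/- Let c ∈ ℂ^{2M+1} and define log_{K,M}(σ) := Σ_{m=−M}^{M} c_m exp(i (π/2) m σ) for Hermitian matrices σ. Let ρ(α) and σ(α) be families of Hermitian d×d matrices depending differentiably on a real parameter α. Then d/dα Tr(ρ(α) log_{K,M} σ(α)) = Tr(ρ'(α) log_{K,M} σ(α)) + Σ_{m=−M}^{M} (i π m c_m / 2) ∫₀¹ Tr( ρ(α) e^{i s (π/2) m σ(α)} σ'(α) e^{i (1−s) (π/2) m σ(α)} ) ds, where ρ' and σ' denote derivatives with respect to α. -/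
/-!
Everything rests on Duhamel's formula `d/dt exp (B t) = ∫₀¹ exp (s B) B' exp ((1 - s) B) ds` in a
real Banach algebra. Differentiating `s ↦ exp (s P) exp ((1 - s) Q)` gives
`exp P - exp Q = ∫₀¹ exp (s P) (P - Q) exp ((1 - s) Q) ds`, so the difference quotient of
`exp ∘ B` is a parametric integral that is jointly continuous in `t` and in the difference
quotient of `B`; letting `t → α` yields the formula. The theorem follows by the product rule and
linearity of the trace, one term `c_m exp (i (π/2) m σ)` of `log_{K,M}` at a time.
-/

attribute [local instance] Matrix.normedAddCommGroup Matrix.normedSpace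

/-- `log_{K,M}(σ) := Σ_{m=−M}^{M} c_m exp(i (π/2) m σ)`. -/
noncomputable def logKM {d : ℕ} (M : ℕ) (c : ℤ → ℂ) (σ : Matrix (Fin d) (Fin d) ℂ) :
    Matrix (Fin d) (Fin d) ℂ :=
  ∑ m ∈ Finset.Icc (-(M : ℤ)) (M : ℤ),
    c m • NormedSpace.exp ((Complex.I * (Real.pi / 2) * (m : ℂ)) • σ)

open NormedSpace intervalIntegral Filter

section NormedAlgebra

variable {𝔸 : Type*} [NormedRing 𝔸] [NormedAlgebra ℝ 𝔸] [CompleteSpace 𝔸]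

@[fun_prop]
theorem continuous_exp_of_normedAlgebra_real : Continuous (exp : 𝔸 → 𝔸) :=
  continuous_iff_continuousAt.2 fun x => (exp_analytic (𝕂 := ℝ) x).continuousAt

theorem hasDerivAt_exp_smul_mul_exp_one_sub_smul (P Q : 𝔸) (s : ℝ) :
    HasDerivAt (fun u : ℝ => exp (u • P) * exp ((1 - u) • Q))
      (exp (s • P) * (P - Q) * exp ((1 - s) • Q)) s := by
  have hQ : HasDerivAt (fun u : ℝ => exp ((1 - u) • Q)) (-(Q * exp ((1 - s) • Q))) s := by
    simpa [Function.comp_def] using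
      (hasDerivAt_exp_smul_const' Q (1 - s)).scomp s ((hasDerivAt_id s).const_sub 1)
  convert (hasDerivAt_exp_smul_const P s).fun_mul hQ using 1
  noncomm_ring

theorem exp_sub_exp_eq_integral (P Q : 𝔸) :
    exp P - exp Q = ∫ s in (0 : ℝ)..1, exp (s • P) * (P - Q) * exp ((1 - s) • Q) := by
  rw [integral_eq_sub_of_hasDerivAt (fun s _ => hasDerivAt_exp_smul_mul_exp_one_sub_smul P Q s)
    ((by fun_prop : Continuous _).intervalIntegrable 0 1)]
  simp

theorem hasDerivAt_exp_of_hasDerivAt {B : ℝ → 𝔸} {B' : 𝔸} {α : ℝ} (hBc : Continuous B)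
    (hB : HasDerivAt B B' α) :
    HasDerivAt (fun t => exp (B t))
      (∫ s in (0 : ℝ)..1, exp (s • B α) * B' * exp ((1 - s) • B α)) α := by
  set G : ℝ × 𝔸 → 𝔸 := fun p => ∫ s in (0 : ℝ)..1, exp (s • B p.1) * p.2 * exp ((1 - s) • B α)
  have hG : Continuous G := continuous_parametric_intervalIntegral_of_continuous' (by fun_prop) 0 1
  have hslope : slope (fun t => exp (B t)) α = fun t => G (t, slope B α t) := by
    ext t
    simp only [G, slope_def_module, exp_sub_exp_eq_integral, ← integral_smul, mul_smul_comm,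
      smul_mul_assoc]
  rw [hasDerivAt_iff_tendsto_slope, hslope]
  exact (hG.tendsto _).comp ((tendsto_id.mono_left nhdsWithin_le_nhds).prodMk_nhds
    (hasDerivAt_iff_tendsto_slope.1 hB))

theorem ContinuousLinearMap.hasDerivAt_apply_mul_exp {F : Type*} [NormedAddCommGroup F]
    [NormedSpace ℝ F] [CompleteSpace F] (L : 𝔸 →L[ℝ] F) {A B : ℝ → 𝔸} {A' B' : 𝔸} {α : ℝ}
    (hA : HasDerivAt A A' α) (hBc : Continuous B) (hB : HasDerivAt B B' α) :
    HasDerivAt (fun t => L (A t * exp (B t)))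
      (L (A' * exp (B α)) +
        ∫ s in (0 : ℝ)..1, L (A α * (exp (s • B α) * B' * exp ((1 - s) • B α)))) α := by
  have hint : IntervalIntegrable (fun s : ℝ => exp (s • B α) * B' * exp ((1 - s) • B α))
      MeasureTheory.volume 0 1 :=
    (by fun_prop : Continuous _).intervalIntegrable 0 1
  convert L.hasFDerivAt.comp_hasDerivAt α (hA.mul (hasDerivAt_exp_of_hasDerivAt hBc hB)) using 1
  · rfl
  rw [map_add]
  exact congrArg _ ((L.comp (.mul ℝ 𝔸 (A α))).intervalIntegral_comp_comm hint)

end NormedAlgebra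

section Matrix

-- All norms on matrices induce the same topology, and the statements below involve only the
-- topology, so the proofs may use the submultiplicative `ℓ∞` operator norm.
open scoped Matrix.Norms.Operator

theorem Matrix.hasDerivAt_trace_mul_exp_smul {n : Type*} [Fintype n] [DecidableEq n] (z : ℂ)
    {ρ σ : ℝ → Matrix n n ℂ} {ρ' σ' : Matrix n n ℂ} {α : ℝ}
    (hρ : HasDerivAt ρ ρ' α) (hσc : Continuous σ) (hσ : HasDerivAt σ σ' α) :
    HasDerivAt (fun t => (ρ t * exp (z • σ t)).trace)
      ((ρ' * exp (z • σ α)).trace +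
        z * ∫ s in (0 : ℝ)..1,
          (ρ α * exp (((s : ℂ) * z) • σ α) * σ' * exp (((1 - s : ℂ) * z) • σ α)).trace) α := by
  let tr : Matrix n n ℂ →L[ℝ] ℂ :=
    LinearMap.toContinuousLinearMap ((Matrix.traceLinearMap n ℂ ℂ).restrictScalars ℝ)
  have real_smul_smul (s : ℝ) (X : Matrix n n ℂ) : s • z • X = ((s : ℂ) * z) • X := by
    rw [← smul_assoc, Complex.real_smul]
  refine (tr.hasDerivAt_apply_mul_exp hρ (hσc.const_smul z) (hσ.const_smul z)).congr_deriv ?_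
  rw [← integral_const_mul]
  congr 1
  refine integral_congr fun s _ => ?_
  change (ρ α * (exp (s • z • σ α) * z • σ' * exp ((1 - s) • z • σ α))).trace = _
  rw [real_smul_smul, real_smul_smul, Complex.ofReal_sub, Complex.ofReal_one]
  simp only [mul_smul_comm, smul_mul_assoc, Matrix.trace_smul, smul_eq_mul, Matrix.mul_assoc]

end Matrix

theorem trace_mul_logKM {d : ℕ} (M : ℕ) (c : ℤ → ℂ) (X σ : Matrix (Fin d) (Fin d) ℂ) :
    (X * logKM M c σ).trace = ∑ m ∈ Finset.Icc (-(M : ℤ)) M,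
      c m * (X * exp ((Complex.I * (Real.pi / 2) * (m : ℂ)) • σ)).trace := by
  simp only [logKM, Matrix.mul_sum, Matrix.trace_sum, Matrix.mul_smul, Matrix.trace_smul,
    smul_eq_mul]

theorem stmt_5_general {d : ℕ} (M : ℕ) (c : ℤ → ℂ)
    (ρ σ ρ' σ' : ℝ → Matrix (Fin d) (Fin d) ℂ)
    (hρ : ∀ t, HasDerivAt ρ (ρ' t) t) (hσ : ∀ t, HasDerivAt σ (σ' t) t) (α : ℝ) :
    HasDerivAt
      (fun t : ℝ => (ρ t * logKM M c (σ t)).trace)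
      ((ρ' α * logKM M c (σ α)).trace +
        ∑ m ∈ Finset.Icc (-(M : ℤ)) (M : ℤ),
          (Complex.I * Real.pi * (m : ℂ) * c m / 2) *
            ∫ s in (0 : ℝ)..1,
              (ρ α *
                NormedSpace.exp ((Complex.I * (s : ℂ) * (Real.pi / 2) * (m : ℂ)) • σ α) *
                σ' α *
                NormedSpace.exp
                  ((Complex.I * ((1 : ℂ) - (s : ℂ)) * (Real.pi / 2) * (m : ℂ)) • σ α)).trace)
      α := by
  have hσc : Continuous σ := continuous_iff_continuousAt.2 fun t => (hσ t).continuousAt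
  simp only [trace_mul_logKM]
  refine (HasDerivAt.fun_sum fun (m : ℤ) _ => ((Matrix.hasDerivAt_trace_mul_exp_smul
    (Complex.I * (Real.pi / 2) * (m : ℂ)) (hρ α) hσc (hσ α)).const_mul (c m))).congr_deriv ?_
  rw [← Finset.sum_add_distrib]
  refine Finset.sum_congr rfl fun m _ => ?_
  have hz (w : ℂ) : w * (Complex.I * (Real.pi / 2) * m) = Complex.I * w * (Real.pi / 2) * m := by
    ring
  rw [mul_add, ← mul_assoc]
  congr 2
  · ring
  · simp only [hz]

/-- For differentiable families `ρ(α)`, `σ(α)` of Hermitian matrices,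
`d/dα Tr(ρ log_{K,M} σ) = Tr(ρ' log_{K,M} σ)
  + Σ_{m=−M}^{M} (iπm c_m/2) ∫₀¹ Tr(ρ e^{is(π/2)mσ} σ' e^{i(1−s)(π/2)mσ}) ds`. -/
theorem stmt_5 {d : ℕ} (M : ℕ) (c : ℤ → ℂ)
    (ρ σ ρ' σ' : ℝ → Matrix (Fin d) (Fin d) ℂ)
    (hρH : ∀ t, (ρ t).IsHermitian) (hσH : ∀ t, (σ t).IsHermitian)
    (hρ : ∀ t, HasDerivAt ρ (ρ' t) t) (hσ : ∀ t, HasDerivAt σ (σ' t) t) (α : ℝ) :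
    HasDerivAt
      (fun t : ℝ => (ρ t * logKM M c (σ t)).trace)
      ((ρ' α * logKM M c (σ α)).trace +
        ∑ m ∈ Finset.Icc (-(M : ℤ)) (M : ℤ),
          (Complex.I * Real.pi * (m : ℂ) * c m / 2) *
            ∫ s in (0 : ℝ)..1,
              (ρ α *
                NormedSpace.exp ((Complex.I * (s : ℂ) * (Real.pi / 2) * (m : ℂ)) • σ α) *
                σ' α *
                NormedSpace.exp
                  ((Complex.I * ((1 : ℂ) - (s : ℂ)) * (Real.pi / 2) * (m : ℂ)) • σ α)).trace)
      α :=
  stmt_5_general M c ρ σ ρ' σ' hρ hσ α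
end

section
/- Let σ(α) be a family of Hermitian d×d matrices depending differentiably on a real parameter α, and let θ ∈ ℝ. Then ‖∂_α e^{i θ σ(α)}‖_∞ ≤ |θ| · ‖∂_α σ(α)‖_∞. -/
attribute [local instance] Matrix.normedAddCommGroup Matrix.normedSpace

/-- The operator (spectral) norm of a complex matrix. -/
noncomputable def opNorm {d : ℕ} (A : Matrix (Fin d) (Fin d) ℂ) : ℝ :=
  ‖Matrix.toEuclideanCLM (𝕜 := ℂ) A‖

/-! Exponentials of skew-adjoint elements of a C⋆-algebra are unitary, so the derivative of
`s ↦ exp (s • a) * exp ((1 - s) • b)`, which is `a - b` multiplied on both sides by unitaries,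
has norm `‖a - b‖`. Hence `exp` is 1-Lipschitz on skew-adjoint elements, `t ↦ exp (iθ σ t)`
moves at most `|θ|` times as fast as `σ`, and comparing difference quotients bounds the
derivative. Matrices enter through their action on Euclidean space, whose operator norm is the
C⋆-norm. -/

open NormedSpace Filter Topology

theorem HasDerivAt.norm_le_mul_of_norm_sub_le {𝕜 E F : Type*} [NontriviallyNormedField 𝕜]
    [NormedAddCommGroup E] [NormedSpace 𝕜 E] [NormedAddCommGroup F] [NormedSpace 𝕜 F]
    {f : 𝕜 → E} {g : 𝕜 → F} {f' : E} {g' : F} {x : 𝕜} {C : ℝ}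
    (hf : HasDerivAt f f' x) (hg : HasDerivAt g g' x)
    (h : ∀ᶠ t in 𝓝 x, ‖f t - f x‖ ≤ C * ‖g t - g x‖) :
    ‖f'‖ ≤ C * ‖g'‖ := by
  refine le_of_tendsto_of_tendsto (hasDerivAt_iff_tendsto_slope.mp hf).norm
    ((hasDerivAt_iff_tendsto_slope.mp hg).norm.const_mul C) ?_
  filter_upwards [nhdsWithin_le_nhds h] with t ht
  rw [slope_def_module, slope_def_module, norm_smul, norm_smul, mul_left_comm]
  gcongr

section CStarAlgebra

variable {A : Type*} [CStarAlgebra A]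

theorem norm_exp_sub_exp_le_of_mem_skewAdjoint {a b : A} (ha : a ∈ skewAdjoint A)
    (hb : b ∈ skewAdjoint A) : ‖exp a - exp b‖ ≤ ‖a - b‖ := by
  -- `exp_mem_unitary_of_mem_skewAdjoint` asks for a normed `ℚ`-algebra structure.
  let +nondep : NormedAlgebra ℚ A := .restrictScalars ℚ ℂ A
  let g : ℝ → A := fun s => exp (s • a) * exp ((1 - s) • b)
  have hg : ∀ s, HasDerivAt g (exp (s • a) * (a - b) * exp ((1 - s) • b)) s := by
    intro s
    have hb' : HasDerivAt (fun u : ℝ => exp ((1 - u) • b)) (-(b * exp ((1 - s) • b))) s := by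
      simpa [Function.comp_def] using (hasDerivAt_exp_smul_const' (𝕂 := ℝ) b (1 - s)).scomp s
        ((hasDerivAt_id s).const_sub 1)
    exact ((hasDerivAt_exp_smul_const (𝕂 := ℝ) a s).mul hb').congr_deriv (by noncomm_ring)
  have hg' : ∀ s : ℝ, ‖exp (s • a) * (a - b) * exp ((1 - s) • b)‖ = ‖a - b‖ := fun s => by
    rw [CStarRing.norm_mul_mem_unitary _
        (exp_mem_unitary_of_mem_skewAdjoint (skewAdjoint.smul_mem _ hb)),
      CStarRing.norm_mem_unitary_mul _
        (exp_mem_unitary_of_mem_skewAdjoint (skewAdjoint.smul_mem _ ha))]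
  simpa [g] using norm_image_sub_le_of_norm_deriv_le_segment_01'
    (fun s _ => (hg s).hasDerivWithinAt) (fun s _ => (hg' s).le)

theorem norm_exp_I_mul_smul_sub_le (θ : ℝ) {x y : A} (hx : IsSelfAdjoint x)
    (hy : IsSelfAdjoint y) :
    ‖exp ((Complex.I * θ) • x) - exp ((Complex.I * θ) • y)‖ ≤ |θ| * ‖x - y‖ := by
  have hIθ : Complex.I * θ ∈ skewAdjoint ℂ := by simp [skewAdjoint.mem_iff]
  calc _ ≤ ‖(Complex.I * θ) • x - (Complex.I * θ) • y‖ :=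
        norm_exp_sub_exp_le_of_mem_skewAdjoint (hx.smul_mem_skewAdjoint hIθ)
          (hy.smul_mem_skewAdjoint hIθ)
    _ = |θ| * ‖x - y‖ := by simp [← smul_sub, norm_smul]

theorem exists_hasDerivAt_exp_I_mul_smul_norm_le (θ : ℝ) {a : ℝ → A} {a' : A} {α : ℝ}
    (hsa : ∀ t, IsSelfAdjoint (a t)) (ha : HasDerivAt a a' α) :
    ∃ D, HasDerivAt (fun t => exp ((Complex.I * θ) • a t)) D α ∧ ‖D‖ ≤ |θ| * ‖a'‖ := by
  have hD := ((exp_analytic (𝕂 := ℂ) ((Complex.I * θ) • a α)).differentiableAt.hasFDerivAt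
    |>.restrictScalars ℝ).comp_hasDerivAt α (ha.const_smul (Complex.I * (θ : ℂ)))
  exact ⟨_, hD, hD.norm_le_mul_of_norm_sub_le ha
    (Eventually.of_forall fun t => norm_exp_I_mul_smul_sub_le θ (hsa t) (hsa α))⟩

end CStarAlgebra

theorem Matrix.toEuclideanCLM_exp {n : Type*} [Fintype n] [DecidableEq n] (M : Matrix n n ℂ) :
    toEuclideanCLM (𝕜 := ℂ) (exp M) = exp (toEuclideanCLM (𝕜 := ℂ) M) :=
  -- `map_exp` wants a Banach algebra norm on the source; the operator norm gives the same topology.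
  open scoped Matrix.Norms.Operator in
  map_exp (toEuclideanCLM (𝕜 := ℂ)) (LinearMap.continuous_of_finiteDimensional
    (toEuclideanCLM (𝕜 := ℂ) (n := n)).toAlgEquiv.toLinearMap) M

/-- For a differentiable family of Hermitian matrices `σ(α)` and `θ ∈ ℝ`,
`‖∂_α e^{iθσ(α)}‖_∞ ≤ |θ| ‖∂_α σ(α)‖_∞`. -/
theorem stmt_9 {d : ℕ} (θ : ℝ)
    (σ σ' : ℝ → Matrix (Fin d) (Fin d) ℂ)
    (hσH : ∀ t, (σ t).IsHermitian)
    (hσ : ∀ t, HasDerivAt σ (σ' t) t) (α : ℝ) :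
    ∃ D, HasDerivAt (fun t : ℝ => NormedSpace.exp ((Complex.I * (θ : ℂ)) • σ t)) D α ∧
      opNorm D ≤ |θ| * opNorm (σ' α) := by
  let Φ := (Matrix.toEuclideanCLM (𝕜 := ℂ) (n := Fin d)).toAlgEquiv.toLinearEquiv
    |>.toContinuousLinearEquiv
  have hΦ : ∀ M, Φ M = Matrix.toEuclideanCLM (𝕜 := ℂ) M := fun _ => rfl
  obtain ⟨D, hD, hDle⟩ := exists_hasDerivAt_exp_I_mul_smul_norm_le θ
    (fun t => IsSelfAdjoint.map (hσH t) (Matrix.toEuclideanCLM (𝕜 := ℂ)))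
    ((Φ.hasFDerivAt.restrictScalars ℝ).comp_hasDerivAt α (hσ α))
  have hexp : (fun t => exp ((Complex.I * θ) • σ t)) =
      Φ.symm ∘ fun t => exp ((Complex.I * θ) • Φ (σ t)) := by
    ext1 t
    rw [Function.comp_apply, hΦ, ← map_smul, ← Matrix.toEuclideanCLM_exp, ← hΦ,
      Φ.symm_apply_apply]
  refine ⟨Φ.symm D, ?_, ?_⟩
  · rw [hexp]
    exact (Φ.symm.hasFDerivAt.restrictScalars ℝ).comp_hasDerivAt α hD
  · rw [opNorm, opNorm, ← hΦ, ← hΦ, Φ.apply_symm_apply]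
    exact hDle
end

section
/- Let l and L be positive integers with l ≤ L, and let M be a nonnegative integer. Then 2^{−l} Σ_{m=0}^{⌊l/2⌋−M} C(l,m) (l − 2m) ≤ l · e^{−M²/L}, where the sum is empty (equal to 0) if ⌊l/2⌋ − M < 0 and C(l,m) is the binomial coefficient. -/
/-!
Chernoff's bound: for `t ≥ 0`, `∑_{m ≤ k} C(l,m) ≤ e^{tk} ∑_m C(l,m) e^{-tm} = e^{tk} (1 + e^{-t})^l`,
and `cosh s ≤ e^{s²/2}` gives `1 + e^{-t} ≤ 2 e^{t²/8 - t/2}`. The choice `t = 4d/l` with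
`d = l/2 - k` yields `∑_{m ≤ k} C(l,m) ≤ 2^l e^{-2d²/l}`. Bounding each factor `l - 2m` by `l`,
the theorem follows from `M ≤ d` and `l ≤ L`.
-/

open Finset Real

lemma one_add_exp_neg_le (t : ℝ) : 1 + exp (-t) ≤ 2 * exp (t ^ 2 / 8 - t / 2) := by
  have hcosh : 1 + exp (-t) = 2 * exp (-t / 2) * cosh (t / 2) := by
    have h : 2 * exp (-t / 2) * ((exp (t / 2) + exp (-(t / 2))) / 2) =
        exp (-t / 2 + t / 2) + exp (-t / 2 + -(t / 2)) := by
      rw [exp_add, exp_add]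
      ring
    rw [cosh_eq, h, show -t / 2 + t / 2 = 0 by ring, show -t / 2 + -(t / 2) = -t by ring, exp_zero]
  calc 1 + exp (-t) = 2 * exp (-t / 2) * cosh (t / 2) := hcosh
    _ ≤ 2 * exp (-t / 2) * exp ((t / 2) ^ 2 / 2) := by
      gcongr
      exact cosh_le_exp_half_sq _
    _ = 2 * exp (t ^ 2 / 8 - t / 2) := by
      rw [mul_assoc, ← exp_add]
      ring_nf

lemma sum_range_choose_le_exp_mul_pow {l k : ℕ} (hkl : k ≤ l) {t : ℝ} (ht : 0 ≤ t) :
    ∑ m ∈ range (k + 1), (l.choose m : ℝ) ≤ exp (t * k) * (1 + exp (-t)) ^ l := by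
  have hterm : ∀ m ∈ range (k + 1),
      (l.choose m : ℝ) ≤ exp (t * k) * ((l.choose m : ℝ) * exp (-t) ^ m) := by
    intro m hm
    have hmk : (m : ℝ) ≤ k := by exact_mod_cast Nat.lt_succ_iff.mp (mem_range.mp hm)
    have hexp : 1 ≤ exp (t * k) * exp (-t) ^ m := by
      rw [← exp_nat_mul, ← exp_add]
      exact one_le_exp (by nlinarith)
    calc (l.choose m : ℝ) = l.choose m * 1 := (mul_one _).symm
      _ ≤ l.choose m * (exp (t * k) * exp (-t) ^ m) := by gcongr
      _ = exp (t * k) * ((l.choose m : ℝ) * exp (-t) ^ m) := by ring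
  calc ∑ m ∈ range (k + 1), (l.choose m : ℝ)
      ≤ ∑ m ∈ range (k + 1), exp (t * k) * ((l.choose m : ℝ) * exp (-t) ^ m) :=
        sum_le_sum hterm
    _ ≤ ∑ m ∈ range (l + 1), exp (t * k) * ((l.choose m : ℝ) * exp (-t) ^ m) :=
        sum_le_sum_of_subset_of_nonneg (range_subset_range.mpr (by omega))
          fun _ _ _ => by positivity
    _ = exp (t * k) * (1 + exp (-t)) ^ l := by
        rw [← mul_sum, add_comm (1 : ℝ), add_pow]
        exact congrArg _ (sum_congr rfl fun m _ => by ring)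

lemma sum_range_choose_le_two_pow_mul_exp {l k : ℕ} (hl : 0 < l) (hk : (k : ℝ) ≤ l / 2) :
    ∑ m ∈ range (k + 1), (l.choose m : ℝ) ≤ 2 ^ l * exp (-2 * ((l : ℝ) / 2 - k) ^ 2 / l) := by
  have hl' : (0 : ℝ) < l := by exact_mod_cast hl
  have hkl : k ≤ l := by exact_mod_cast (show (k : ℝ) ≤ l by linarith)
  set t : ℝ := 4 * ((l : ℝ) / 2 - k) / l
  calc ∑ m ∈ range (k + 1), (l.choose m : ℝ)
      ≤ exp (t * k) * (1 + exp (-t)) ^ l :=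
        sum_range_choose_le_exp_mul_pow hkl (by unfold t; have := sub_nonneg.mpr hk; positivity)
    _ ≤ exp (t * k) * (2 * exp (t ^ 2 / 8 - t / 2)) ^ l := by
        gcongr
        exact one_add_exp_neg_le t
    _ = 2 ^ l * exp (-2 * ((l : ℝ) / 2 - k) ^ 2 / l) := by
        rw [mul_pow, ← exp_nat_mul, mul_left_comm, ← exp_add]
        congr 2
        unfold t
        field_simp
        ring

lemma sum_choose_mul_sub_le (l : ℕ) (s : Finset ℕ) :
    ∑ m ∈ s, (l.choose m : ℝ) * ((l : ℝ) - 2 * m) ≤ l * ∑ m ∈ s, (l.choose m : ℝ) := by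
  rw [mul_sum]
  refine sum_le_sum fun m _ => ?_
  rw [mul_comm (l : ℝ)]
  gcongr
  linarith [(m.cast_nonneg : (0 : ℝ) ≤ m)]

theorem stmt_11_general (l L M : ℕ) (hl : 0 < l) (hlL : l ≤ L) :
    (∑ m ∈ Finset.range (l / 2 + 1 - M), (l.choose m : ℝ) * ((l : ℝ) - 2 * m)) / 2 ^ l ≤
      (l : ℝ) * Real.exp (-((M : ℝ) ^ 2) / L) := by
  rcases le_or_gt (l / 2 + 1) M with hM | hM
  · rw [Nat.sub_eq_zero_of_le hM, range_zero, sum_empty, zero_div]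
    positivity
  have hl' : (0 : ℝ) < l := by exact_mod_cast hl
  have hlL' : (l : ℝ) ≤ L := by exact_mod_cast hlL
  set k := l / 2 - M
  rw [show l / 2 + 1 - M = k + 1 by omega]
  have hkM : (k : ℝ) + M ≤ l / 2 := by
    rw [← Nat.cast_add, show k + M = l / 2 by omega]
    exact Nat.cast_div_le
  have hexp : exp (-2 * ((l : ℝ) / 2 - k) ^ 2 / l) ≤ exp (-((M : ℝ) ^ 2) / L) := by
    rw [exp_le_exp, div_le_div_iff₀ hl' (hl'.trans_le hlL')]
    have hMd : (M : ℝ) ^ 2 ≤ ((l : ℝ) / 2 - k) ^ 2 := by gcongr; linarith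
    nlinarith
  rw [div_le_iff₀ (by positivity)]
  calc ∑ m ∈ range (k + 1), (l.choose m : ℝ) * ((l : ℝ) - 2 * m)
      ≤ l * ∑ m ∈ range (k + 1), (l.choose m : ℝ) := sum_choose_mul_sub_le l _
    _ ≤ l * (2 ^ l * exp (-2 * ((l : ℝ) / 2 - k) ^ 2 / l)) := by
        gcongr
        exact sum_range_choose_le_two_pow_mul_exp hl (by linarith)
    _ ≤ l * (2 ^ l * exp (-((M : ℝ) ^ 2) / L)) := by gcongr
    _ = l * exp (-((M : ℝ) ^ 2) / L) * 2 ^ l := by ring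

/-- For positive integers `l ≤ L` and a nonnegative integer `M`,
`2^{−l} Σ_{m=0}^{⌊l/2⌋−M} C(l,m)(l−2m) ≤ l e^{−M²/L}` (the sum being empty when
`⌊l/2⌋ − M < 0`). -/
theorem stmt_11 (l L M : ℕ) (hl : 0 < l) (hL : 0 < L) (hlL : l ≤ L) :
    (∑ m ∈ Finset.range (l / 2 + 1 - M), (l.choose m : ℝ) * ((l : ℝ) - 2 * m)) / 2 ^ l ≤
      (l : ℝ) * Real.exp (-((M : ℝ) ^ 2) / L) :=
  stmt_11_general l L M hl hlL
end
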